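/- The operator Q = Σ_{i,j=1}^{N+2m} e_{ij} ⊗ e_{i'j'} (−1)^{\bar{i}\bar{j}} θ_i θ_j on ℂ^{N|2m} ⊗ ℂ^{N|2m} satisfies Q² = (N − 2m)·Q, where the product in the tensor square of End ℂ^{N|2m} is taken with the super sign rule (a⊗b)(c⊗d) = (−1)^{p(b)p(c)} ac ⊗ bd for homogeneous b, c. -/

import Mathlib

/-!
STATEMENT 2: the operator `Q = Σ_{i,j} e_{ij} ⊗ e_{i'j'} (−1)^{\bar i \bar j} θ_i θ_j`
satisfies `Q² = (N − 2m) Q`, where the product in the super tensor square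
`End ℂ^{N|2m} ⊗ End ℂ^{N|2m}` (with the Koszul sign rule
`(a⊗b)(c⊗d) = (−1)^{p(b)p(c)} ac ⊗ bd`) is realized faithfully through the
super action of `End ℂ^{N|2m} ⊗ End ℂ^{N|2m}` on `ℂ^{N|2m} ⊗ ℂ^{N|2m}`,
`(a ⊗ b)(v ⊗ w) = (−1)^{p(b)p(v)} av ⊗ bw`.
-/

noncomputable section
namespace OSp
open Matrix

/-- the parity `\bar i` (0-based indexing of `1,…,N+2m`). -/
def pbar (N m : ℕ) (i : Fin (N + 2*m)) : ℕ :=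
  if i.val < m ∨ N + m ≤ i.val then 1 else 0

/-- the sign `θ_i`. -/
def th (N m : ℕ) (i : Fin (N + 2*m)) : ℂ :=
  if i.val < N + m then 1 else -1

/-- the involution `i ↦ i' = N + 2m − i + 1` (0-based: `i ↦ N + 2m − 1 − i`). -/
def dual (N m : ℕ) (i : Fin (N + 2*m)) : Fin (N + 2*m) := i.rev

/-- the operator `e_{ij} ⊗ e_{kl}` on `ℂ^{N|2m} ⊗ ℂ^{N|2m}`. -/
def ST (N m : ℕ) (i j k l : Fin (N + 2*m)) :
    Matrix (Fin (N + 2*m) × Fin (N + 2*m)) (Fin (N + 2*m) × Fin (N + 2*m)) ℂ :=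
  Matrix.of fun p q =>
    if p = (i, k) ∧ q = (j, l) then
      (-1 : ℂ) ^ ((pbar N m k + pbar N m l) * pbar N m j) else 0

/-- `Q = Σ_{i,j} e_{ij} ⊗ e_{i'j'} (−1)^{\bar i \bar j} θ_i θ_j`. -/
def Qop (N m : ℕ) :
    Matrix (Fin (N + 2*m) × Fin (N + 2*m)) (Fin (N + 2*m) × Fin (N + 2*m)) ℂ :=
  ∑ i : Fin (N + 2*m), ∑ j : Fin (N + 2*m),
    ((-1 : ℂ) ^ (pbar N m i * pbar N m j) * th N m i * th N m j) •
      ST N m i j (dual N m i) (dual N m j)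

lemma pbar_dual (N m : ℕ) (i : Fin (N + 2*m)) : pbar N m (dual N m i) = pbar N m i := by
  simp only [pbar, dual, Fin.val_rev]
  have := i.isLt
  by_cases h1 : (i : ℕ) < m ∨ N + m ≤ (i : ℕ) <;>
    by_cases h2 : N + 2 * m - ((i : ℕ) + 1) < m ∨ N + m ≤ N + 2 * m - ((i : ℕ) + 1) <;>
    simp only [h1, h2, if_true, if_false] <;> omega

lemma th_mul_self (N m : ℕ) (i : Fin (N + 2*m)) : th N m i * th N m i = 1 := by
  unfold th; split <;> norm_num

lemma Qop_apply (N m : ℕ) (p q : Fin (N + 2*m) × Fin (N + 2*m)) :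
    Qop N m p q =
      if p.2 = dual N m p.1 ∧ q.2 = dual N m q.1 then
        th N m p.1 * th N m q.1 * (-1 : ℂ) ^ (pbar N m q.1) else 0 := by
  have key : ∀ i j : Fin (N + 2*m),
      ((-1 : ℂ) ^ (pbar N m i * pbar N m j)) *
        ((-1 : ℂ) ^ ((pbar N m i + pbar N m j) * pbar N m j)) = (-1 : ℂ) ^ (pbar N m j) := by
    intro i j
    unfold pbar
    split <;> split <;> norm_num
  simp only [Qop, Matrix.sum_apply, Matrix.smul_apply, ST, Matrix.of_apply,
    Prod.ext_iff, ite_and, smul_eq_mul, mul_ite, mul_zero]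
  rw [Finset.sum_eq_single p.1]
  · rw [Finset.sum_eq_single q.1]
    · by_cases h1 : p.2 = dual N m p.1 <;> by_cases h2 : q.2 = dual N m q.1 <;>
        simp [h1, h2, pbar_dual]
      rw [mul_comm (th N m p.1) (th N m q.1)]
      rw [show ((-1:ℂ) ^ (pbar N m p.1 * pbar N m q.1) * th N m p.1 * th N m q.1) *
          ((-1:ℂ) ^ ((pbar N m p.1 + pbar N m q.1) * pbar N m q.1)) =
          (((-1:ℂ) ^ (pbar N m p.1 * pbar N m q.1)) *
            ((-1:ℂ) ^ ((pbar N m p.1 + pbar N m q.1) * pbar N m q.1))) *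
            (th N m p.1 * th N m q.1) by ring, key]
      ring
    · intro b _ hb; simp [hb.symm]
    · simp
  · intro b _ hb; simp [hb.symm]
  · simp

lemma sum_sign (N m : ℕ) :
    ∑ r : Fin (N + 2*m), ((-1 : ℂ) ^ (pbar N m r)) = (N : ℂ) - 2 * (m : ℂ) := by
  have : ∑ r : Fin (N + 2*m), ((-1 : ℂ) ^ (pbar N m r)) =
      ∑ k ∈ Finset.range (N + 2*m), (if k < m ∨ N + m ≤ k then (-1 : ℂ) else 1) := by
    rw [Finset.sum_range fun k => _]
    · apply Finset.sum_congr rfl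
      intro i _
      unfold pbar
      split <;> simp_all
  rw [this]
  have h1 : Finset.range (N + 2*m) =
      Finset.Ico 0 m ∪ (Finset.Ico m (N + m) ∪ Finset.Ico (N + m) (N + 2*m)) := by
    rw [Finset.Ico_union_Ico_eq_Ico (by omega) (by omega),
      Finset.Ico_union_Ico_eq_Ico (by omega) (by omega), Finset.range_eq_Ico]
  rw [h1, Finset.sum_union, Finset.sum_union]
  · have e1 : ∑ k ∈ Finset.Ico 0 m, (if k < m ∨ N + m ≤ k then (-1 : ℂ) else 1) =
        ∑ k ∈ Finset.Ico 0 m, (-1 : ℂ) := by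
      apply Finset.sum_congr rfl; intro k hk; simp at hk; simp [hk]
    have e2 : ∑ k ∈ Finset.Ico m (N+m), (if k < m ∨ N + m ≤ k then (-1 : ℂ) else 1) =
        ∑ k ∈ Finset.Ico m (N+m), (1 : ℂ) := by
      apply Finset.sum_congr rfl; intro k hk; simp at hk
      rw [if_neg (by omega)]
    have e3 : ∑ k ∈ Finset.Ico (N+m) (N+2*m), (if k < m ∨ N + m ≤ k then (-1 : ℂ) else 1) =
        ∑ k ∈ Finset.Ico (N+m) (N+2*m), (-1 : ℂ) := by
      apply Finset.sum_congr rfl; intro k hk; simp at hk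
      rw [if_pos (by omega)]
    rw [e1, e2, e3]
    simp [Finset.sum_const, Nat.Ico_zero_eq_range, Nat.card_Ico]
    rw [show N + 2 * m - (N + m) = m from by omega]
    ring
  · apply Finset.Ico_disjoint_Ico_consecutive
  · rw [Finset.disjoint_union_right]
    constructor
    · exact Finset.Ico_disjoint_Ico_consecutive 0 m (N+m)
    · apply Finset.Ico_disjoint_Ico_consecutive 0 m (N+2*m) |>.mono_right
      exact Finset.Ico_subset_Ico (by omega) le_rfl

theorem Q_sq (N m : ℕ) :
    Qop N m * Qop N m = ((N : ℂ) - 2 * (m : ℂ)) • Qop N m := by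
  ext p q
  rw [Matrix.mul_apply, Matrix.smul_apply]
  simp only [Qop_apply]
  rw [Fintype.sum_prod_type]
  simp only [ite_and]
  by_cases h1 : p.2 = dual N m p.1 <;> by_cases h2 : q.2 = dual N m q.1 <;>
    simp [h1, h2]
  have key : ∀ x : Fin (N+2*m),
      th N m p.1 * th N m x * (-1:ℂ)^(pbar N m x) *
        (th N m x * th N m q.1 * (-1:ℂ)^(pbar N m q.1)) =
      (-1:ℂ)^(pbar N m x) * (th N m p.1 * th N m q.1 * (-1:ℂ)^(pbar N m q.1)) := by
    intro x
    rw [show th N m p.1 * th N m x * (-1:ℂ)^(pbar N m x) *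
        (th N m x * th N m q.1 * (-1:ℂ)^(pbar N m q.1)) =
        (th N m x * th N m x) *
          ((-1:ℂ)^(pbar N m x) * (th N m p.1 * th N m q.1 * (-1:ℂ)^(pbar N m q.1))) by ring,
      th_mul_self, one_mul]
  rw [Finset.sum_congr rfl fun x _ => key x, ← Finset.sum_mul, sum_sign]


end OSp
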